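/- For every integer s ≥ 2, every finite 1-locally s-colourable simple graph G on n vertices satisfies χ(G) ≤ √(2sn) (as an inequality of real numbers). -/

import Mathlib

open SimpleGraph

/-- `σ` is a proper colouring of `G` with colours in `ℕ`. -/
def IsProperColoring {V : Type*} (G : SimpleGraph V) (σ : V → ℕ) : Prop :=
  ∀ ⦃u v : V⦄, G.Adj u v → σ u ≠ σ v

/-- The chromatic number of `G`, as a natural number. -/
noncomputable def chromNum {V : Type*} (G : SimpleGraph V) : ℕ :=
  sInf {n : ℕ | G.Colorable n}

/-- The discrepancy `φ_σ(G)` of a proper colouring `σ` of `G`: the maximum, over all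
induced subgraphs `G[S]` of `G`, of `|σ(S)| - χ(G[S])`. -/
noncomputable def colDisc {V : Type*} (G : SimpleGraph V) (σ : V → ℕ) : ℤ :=
  sSup {z : ℤ | ∃ S : Set V, z = ((σ '' S).ncard : ℤ) - (chromNum (G.induce S) : ℤ)}

/-- The chromatic discrepancy `φ(G)`: the minimum of `φ_σ(G)` over all proper
colourings `σ` of `G`. -/
noncomputable def chromDisc {V : Type*} (G : SimpleGraph V) : ℤ :=
  sInf {z : ℤ | ∃ σ : V → ℕ, IsProperColoring G σ ∧ z = colDisc G σ}

/-- `G` is locally `s`-colourable: the closed neighbourhood of every vertex induces an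
`s`-colourable subgraph. -/
def LocallyColorable {V : Type*} (G : SimpleGraph V) (s : ℕ) : Prop :=
  ∀ v : V, chromNum (G.induce (insert v (G.neighborSet v))) ≤ s

/-- The set of vertices at distance at most `r` from `v` in `G`. -/
def ballSet {V : Type*} (G : SimpleGraph V) (v : V) (r : ℕ) : Set V :=
  {u : V | ∃ w : G.Walk v u, w.length ≤ r}

/-- `G` is `r`-locally `s`-colourable: every ball of radius `r` induces an
`s`-colourable subgraph. -/
def RLocallyColorable {V : Type*} (G : SimpleGraph V) (r s : ℕ) : Prop :=
  ∀ v : V, chromNum (G.induce (ballSet G v r)) ≤ s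

/-- `G` contains no cycle of length exactly `n` as a (not necessarily induced) subgraph. -/
def CycleLenFree {V : Type*} (G : SimpleGraph V) (n : ℕ) : Prop :=
  ∀ (v : V) (w : G.Walk v v), w.IsCycle → w.length ≠ n

/-- `H` is `k`-degenerate: every non-empty (induced) subgraph contains a vertex of
degree at most `k` in it. -/
def Degenerate {α : Type*} (H : SimpleGraph α) (k : ℕ) : Prop :=
  ∀ S : Set α, S.Nonempty → ∃ a ∈ S, {b | b ∈ S ∧ H.Adj a b}.ncard ≤ k

/-- `G` is co-locally `s`-colourable: for all vertices `u ≠ v`,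
`χ(G[{u} ∪ N(v)]) ≤ s`. -/
def CoLocallyColorable {V : Type*} (G : SimpleGraph V) (s : ℕ) : Prop :=
  ∀ v u : V, u ≠ v → chromNum (G.induce (insert u (G.neighborSet v))) ≤ s

/-- The minimum of `χ(G[X])` over all subsets `X ⊆ V(G)` spanning exactly `p` colours
of `σ` (a rainbow cover of `σ` when `σ` uses exactly `p` colours). -/
noncomputable def minRainbowChrom {V : Type*} (G : SimpleGraph V) (σ : V → ℕ) (p : ℕ) : ℕ :=
  sInf {c : ℕ | ∃ X : Set V, (σ '' X).ncard = p ∧ c = chromNum (G.induce X)}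

/-- `f_G(p)`: the maximum, over all proper colourings `σ` of `G` using exactly `p`
colours, of the minimum chromatic number of a rainbow cover of `σ`. -/
noncomputable def fG {V : Type*} (G : SimpleGraph V) (p : ℕ) : ℕ :=
  sSup {m : ℕ | ∃ σ : V → ℕ, IsProperColoring G σ ∧ (σ '' Set.univ).ncard = p ∧
    m = minRainbowChrom G σ p}

/-- The closed neighbourhood `N[X]` of a set `X` of vertices. -/
def closedNbhd {V : Type*} (G : SimpleGraph V) (X : Set V) : Set V :=
  X ∪ {u : V | ∃ x ∈ X, G.Adj x u}

/-!
Induct on the vertex set `S`. If some `v ∈ S` has at least `√(2s|S|)` vertices of `S` in its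
closed neighbourhood `N[v]`, colour `S ∩ N[v]` with `s` colours and `S \ N[v]` by induction:
since `|S \ N[v]| ≤ |S| - √(2s|S|)`, the total stays below `√(2s|S|)`. Otherwise all closed
neighbourhoods within `S` have fewer than `√(2s|S|)` vertices and a greedy colouring suffices.
-/

namespace SimpleGraph

variable {V W : Type*} {G : SimpleGraph V}

lemma chromNum_le_of_colorable {n : ℕ} (h : G.Colorable n) : chromNum G ≤ n :=
  Nat.sInf_le h

lemma colorable_chromNum [Finite V] (G : SimpleGraph V) : G.Colorable (chromNum G) :=
  Nat.sInf_mem (s := {n | G.Colorable n}) ⟨_, colorable_chromaticNumber_of_fintype G⟩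

lemma chromNum_le_of_hom [Finite W] {H : SimpleGraph W} (f : G →g H) :
    chromNum G ≤ chromNum H :=
  chromNum_le_of_colorable ((colorable_chromNum H).of_hom f)

lemma chromNum_induce_mono [Finite V] {S T : Set V} (h : S ⊆ T) :
    chromNum (G.induce S) ≤ chromNum (G.induce T) :=
  chromNum_le_of_hom (induceHom Hom.id h)

lemma Colorable.induce_of_inter_of_diff {S A : Set V} {a b : ℕ}
    (hA : (G.induce (S ∩ A)).Colorable a) (hB : (G.induce (S \ A)).Colorable b) :
    (G.induce S).Colorable (a + b) := by
  classical
  obtain ⟨CA⟩ := hA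
  obtain ⟨CB⟩ := hB
  let C : (G.induce S).Coloring (Fin a ⊕ Fin b) := Coloring.mk
    (fun x => if hx : x.1 ∈ A then .inl (CA ⟨x, x.2, hx⟩) else .inr (CB ⟨x, x.2, hx⟩)) <| by
      rintro ⟨u, hu⟩ ⟨v, hv⟩ huv
      by_cases huA : u ∈ A <;> by_cases hvA : v ∈ A <;> simp only [huA, hvA, dite_true,
        dite_false, ne_eq, reduceCtorEq, not_false_eq_true, Sum.inl.injEq, Sum.inr.injEq]
      · exact CA.valid huv
      · exact CB.valid huv
  simpa using C.colorable

lemma chromNum_induce_le_add [Finite V] (S A : Set V) :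
    chromNum (G.induce S) ≤ chromNum (G.induce (S ∩ A)) + chromNum (G.induce (S \ A)) :=
  chromNum_le_of_colorable ((colorable_chromNum _).induce_of_inter_of_diff (colorable_chromNum _))

lemma colorable_induce_of_ncard_inter_closedNeighborSet_le [Finite V] {S : Set V} {n : ℕ}
    (h : ∀ v ∈ S, (S ∩ insert v (G.neighborSet v)).ncard ≤ n) : (G.induce S).Colorable n := by
  classical
  -- Colours in `ℕ` rather than `Fin n`, so that the empty set is coloured even when `n = 0`.
  suffices ∃ c : V → ℕ, (∀ u ∈ S, c u < n) ∧ ∀ u ∈ S, ∀ w ∈ S, G.Adj u w → c u ≠ c w by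
    obtain ⟨c, hlt, hc⟩ := this
    exact ⟨Coloring.mk (fun x => ⟨c x, hlt x x.2⟩)
      fun {u w} huw => Fin.val_ne_iff.mp (hc u u.2 w w.2 huw)⟩
  refine S.toFinite.induction_on_subset (motive := fun t _ =>
      ∃ c : V → ℕ, (∀ u ∈ t, c u < n) ∧ ∀ u ∈ t, ∀ w ∈ t, G.Adj u w → c u ≠ c w) _
    ⟨fun _ => 0, by simp, by simp⟩ ?_
  rintro a t ha hts hat ⟨c, hlt, hc⟩
  have hused : (c '' (t ∩ G.neighborSet a)).ncard < (Set.Iio n).ncard := calc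
    (c '' (t ∩ G.neighborSet a)).ncard ≤ (t ∩ G.neighborSet a).ncard := Set.ncard_image_le
    _ < (S ∩ insert a (G.neighborSet a)).ncard := by
      refine Set.ncard_lt_ncard ⟨fun x hx => ⟨hts hx.1, .inr hx.2⟩, fun hsub => ?_⟩
      exact hat (hsub ⟨ha, Set.mem_insert _ _⟩).1
    _ ≤ n := h a ha
    _ = (Set.Iio n).ncard := (Set.ncard_Iio_nat n).symm
  obtain ⟨k, hk, hkfree⟩ := Set.exists_mem_notMem_of_ncard_lt_ncard hused
  refine ⟨Function.update c a k, ?_, ?_⟩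
  · rintro u (rfl | hu)
    · simpa using hk
    · rw [Function.update_of_ne (ne_of_mem_of_not_mem hu hat)]
      exact hlt u hu
  · rintro u (rfl | hu) w (rfl | hw) huw
    · exact (G.irrefl huw).elim
    · rw [Function.update_self, Function.update_of_ne (ne_of_mem_of_not_mem hw hat)]
      exact fun hkw => hkfree ⟨w, ⟨hw, huw⟩, hkw.symm⟩
    · rw [Function.update_self, Function.update_of_ne (ne_of_mem_of_not_mem hu hat)]
      exact fun hku => hkfree ⟨u, ⟨hu, huw.symm⟩, hku⟩
    · rw [Function.update_of_ne (ne_of_mem_of_not_mem hu hat),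
        Function.update_of_ne (ne_of_mem_of_not_mem hw hat)]
      exact hc u hu w hw huw

end SimpleGraph

lemma add_sqrt_sub_le_sqrt {s N c : ℝ} (hs : 0 ≤ s) (hc : 0 < c) (hcN : c ≤ N)
    (hac : √(2 * s * N) ≤ c) : s + √(2 * s * (N - c)) ≤ √(2 * s * N) := by
  have hsq : 2 * s * N ≤ c ^ 2 := (Real.sqrt_le_iff.mp hac).2
  have h2s : 2 * s ≤ c := le_of_mul_le_mul_right (by nlinarith) hc
  have hb : √(2 * s * (N - c)) ≤ c - s / 2 :=
    Real.sqrt_le_iff.mpr ⟨by linarith, by nlinarith⟩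
  have hNc : 0 ≤ 2 * s * (N - c) := mul_nonneg (by positivity) (by linarith)
  rw [Real.le_sqrt (by positivity) (by nlinarith)]
  nlinarith [Real.sq_sqrt hNc, Real.sqrt_nonneg (2 * s * (N - c))]

theorem LocallyColorable.chromNum_induce_le_sqrt {V : Type*} [Finite V] {G : SimpleGraph V}
    {s : ℕ} (hloc : LocallyColorable G s) (S : Set V) :
    (chromNum (G.induce S) : ℝ) ≤ √(2 * s * S.ncard) := by
  by_cases hdense : ∃ v ∈ S, √(2 * s * S.ncard) ≤ (S ∩ insert v (G.neighborSet v)).ncard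
  · obtain ⟨v, hv, hc⟩ := hdense
    set N := insert v (G.neighborSet v)
    have hvN : v ∈ S ∩ N := ⟨hv, Set.mem_insert _ _⟩
    -- picked up by `termination_by` for the recursive call on `S \ N`
    have hlt : (S \ N).ncard < S.ncard :=
      Set.ncard_lt_ncard ⟨Set.sdiff_subset, fun hsub => (hsub hv).2 (Set.mem_insert _ _)⟩
    have hcard : ((S \ N).ncard : ℝ) = S.ncard - (S ∩ N).ncard := by
      rw [← Set.ncard_inter_add_ncard_sdiff_eq_ncard S N]
      push_cast
      ring
    calc (chromNum (G.induce S) : ℝ)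
        ≤ chromNum (G.induce (S ∩ N)) + chromNum (G.induce (S \ N)) := by
          exact_mod_cast chromNum_induce_le_add S N
      _ ≤ s + √(2 * s * (S \ N).ncard) := by
          gcongr
          · exact_mod_cast (chromNum_induce_mono Set.inter_subset_right).trans (hloc v)
          · exact hloc.chromNum_induce_le_sqrt (S \ N)
      _ ≤ √(2 * s * S.ncard) := by
          rw [hcard]
          refine add_sqrt_sub_le_sqrt (Nat.cast_nonneg s) ?_ ?_ hc
          · exact_mod_cast ((Set.ncard_pos).mpr ⟨v, hvN⟩)
          · exact_mod_cast Set.ncard_le_ncard Set.inter_subset_left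
  · push Not at hdense
    have hcol : (G.induce S).Colorable ⌊√(2 * s * S.ncard)⌋₊ :=
      colorable_induce_of_ncard_inter_closedNeighborSet_le fun v hv =>
        Nat.le_floor (hdense v hv).le
    exact (Nat.cast_le.mpr (chromNum_le_of_colorable hcol)).trans (Nat.floor_le (by positivity))
termination_by S.ncard

theorem chromNum_le_sqrt_general {V : Type*} [Fintype V]
    (s : ℕ) (G : SimpleGraph V) (hloc : LocallyColorable G s) :
    (chromNum G : ℝ) ≤ Real.sqrt (2 * s * Fintype.card V) := by
  have h := hloc.chromNum_induce_le_sqrt Set.univ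
  rw [Set.ncard_univ, Nat.card_eq_fintype_card] at h
  exact (Nat.cast_le.mpr (chromNum_le_of_hom (induceUnivIso G).symm.toHom)).trans h

/-- For every integer `s ≥ 2`, every finite `1`-locally `s`-colourable
graph `G` on `n` vertices satisfies `χ(G) ≤ √(2sn)`. -/
theorem chromNum_le_sqrt {V : Type*} [Fintype V]
    (s : ℕ) (hs : 2 ≤ s) (G : SimpleGraph V) (hloc : LocallyColorable G s) :
    (chromNum G : ℝ) ≤ Real.sqrt (2 * s * Fintype.card V) :=
  chromNum_le_sqrt_general s G hloc
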